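/- Let 𝔾 be a grid diagram of size m, let x and y be grid states of 𝔾, and let r ∈ Rect(x,y). Then M(x) − M(y) = 1 − 2·#(r ∩ 𝕆) + 2·#(Int(r) ∩ x) and A(x) − A(y) = #(r ∩ 𝕏) − #(r ∩ 𝕆). -/

import Mathlib

/-!
Grid diagrams, the filtered grid complex over `F₂ = ZMod 2`, its Alexander
filtration, Maslov grading, canonical (Legendrian) grid states, the associated
spectral sequence, and the grid moves (commutation, X:SE/X:NW (de)stabilization,
X swap, O swap, birth).
-/

noncomputable section

open Finset

/-- A grid diagram of size `m`: two permutations recording the rows of the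
`O`-markers and the `X`-markers in each column, with no marker collisions. -/
structure GridDiagram (m : ℕ) where
  σO : Equiv.Perm (Fin m)
  σX : Equiv.Perm (Fin m)
  ne : ∀ i, σO i ≠ σX i

namespace Grid

variable {m m' : ℕ}

/-- `I(P,Q)`: the number of pairs `(p, q) ∈ P × Q` with `p₁ < q₁` and `p₂ < q₂`. -/
def Icount (P Q : Finset (ℚ × ℚ)) : ℕ :=
  ((P ×ˢ Q).filter fun pq => pq.1.1 < pq.2.1 ∧ pq.1.2 < pq.2.2).card

/-- `J(P,Q) = (I(P,Q) + I(Q,P))/2`. -/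
def Jcount (P Q : Finset (ℚ × ℚ)) : ℚ := ((Icount P Q : ℚ) + (Icount Q P : ℚ)) / 2

/-- The set of points of a grid state. -/
def ptSet (x : Equiv.Perm (Fin m)) : Finset (ℚ × ℚ) :=
  Finset.univ.image fun i => ((i.val : ℚ), ((x i).val : ℚ))

/-- The set of `O`-markers, as points in the plane. -/
def Omark (G : GridDiagram m) : Finset (ℚ × ℚ) :=
  Finset.univ.image fun i => ((i.val : ℚ) + 1/2, ((G.σO i).val : ℚ) + 1/2)

/-- The set of `X`-markers, as points in the plane. -/
def Xmark (G : GridDiagram m) : Finset (ℚ × ℚ) :=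
  Finset.univ.image fun i => ((i.val : ℚ) + 1/2, ((G.σX i).val : ℚ) + 1/2)

/-- The Maslov function `M = M_𝕆`. -/
def MaslovO (G : GridDiagram m) (x : Equiv.Perm (Fin m)) : ℚ :=
  Jcount (ptSet x) (ptSet x) - 2 * Jcount (ptSet x) (Omark G)
    + Jcount (Omark G) (Omark G) + 1

/-- The function `M_𝕏`. -/
def MaslovX (G : GridDiagram m) (x : Equiv.Perm (Fin m)) : ℚ :=
  Jcount (ptSet x) (ptSet x) - 2 * Jcount (ptSet x) (Xmark G)
    + Jcount (Xmark G) (Xmark G) + 1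

/-- The number `ℓ` of components of the link represented by `G`, i.e. the
number of cycles of `σX⁻¹ ∘ σO` (which has no fixed points). -/
def numComp (G : GridDiagram m) : ℕ := (G.σX⁻¹ * G.σO).cycleType.card

/-- The Alexander function `A(x) = ½(M_𝕆(x) − M_𝕏(x)) − (m − ℓ)/2`. -/
def Alex (G : GridDiagram m) (x : Equiv.Perm (Fin m)) : ℚ :=
  (MaslovO G x - MaslovX G x) / 2 - ((m : ℚ) - (numComp G : ℚ)) / 2

/-- The half-open cyclic interval `[u, v)` in `Fin m`. -/
def cycInt (u v : Fin m) : Finset (Fin m) :=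
  Finset.univ.filter fun w => (w - u).val < (v - u).val

/-- The set of cells of the toroidal rectangle `[i, j) × [a, b)`. -/
def rectCells (i j a b : Fin m) : Finset (Fin m × Fin m) := cycInt i j ×ˢ cycInt a b

/-- The set `Rect(x, y)` of (cell sets of) toroidal rectangles from `x` to `y`. -/
def Rect (x y : Equiv.Perm (Fin m)) : Set (Finset (Fin m × Fin m)) :=
  { r | ∃ i j : Fin m, i ≠ j ∧ y = x * Equiv.swap i j ∧
      (r = rectCells i j (x i) (x j) ∨ r = rectCells j i (x j) (x i)) }

/-- The cyclically previous index. -/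
def prev (k : Fin m) : Fin m := (finRotate m)⁻¹ k

/-- The points of the grid state `x` lying in the interior of the region with
cell set `r`: a lattice point is interior iff all four adjacent cells are in `r`. -/
def intPts (x : Equiv.Perm (Fin m)) (r : Finset (Fin m × Fin m)) : Finset (Fin m) :=
  Finset.univ.filter fun k =>
    (k, x k) ∈ r ∧ (prev k, x k) ∈ r ∧ (k, prev (x k)) ∈ r ∧ (prev k, prev (x k)) ∈ r

/-- The set `Rect°(x, y)` of empty rectangles from `x` to `y`. -/
def ERect (x y : Equiv.Perm (Fin m)) : Set (Finset (Fin m × Fin m)) :=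
  { r | r ∈ Rect x y ∧ intPts x r = ∅ }

/-- The number of `O`-markers in the region `r`, `#(r ∩ 𝕆)`. -/
def countO (G : GridDiagram m) (r : Finset (Fin m × Fin m)) : ℕ :=
  (Finset.univ.filter fun c : Fin m => (c, G.σO c) ∈ r).card

/-- The number of `X`-markers in the region `r`, `#(r ∩ 𝕏)`. -/
def countX (G : GridDiagram m) (r : Finset (Fin m × Fin m)) : ℕ :=
  (Finset.univ.filter fun c : Fin m => (c, G.σX c) ∈ r).card

/-- The underlying `F₂`-vector space of the filtered grid complex `𝒢̃C(𝔾)`,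
with basis the grid states. -/
abbrev GC (m : ℕ) := Equiv.Perm (Fin m) →₀ ZMod 2

/-- The number of empty rectangles from `x` to `y` containing no `O`-marker. -/
def countDRect (G : GridDiagram m) (x y : Equiv.Perm (Fin m)) : ℕ :=
  Nat.card {r : Finset (Fin m × Fin m) // r ∈ ERect x y ∧ countO G r = 0}

/-- The differential `∂̃` of the filtered grid complex, counting empty
rectangles containing no `O`-marker. -/
def delta (G : GridDiagram m) : GC m →ₗ[ZMod 2] GC m :=
  Finsupp.lsum (ZMod 2) fun x => LinearMap.toSpanSingleton (ZMod 2) (GC m)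
    (∑ y : Equiv.Perm (Fin m), (countDRect G x y : ZMod 2) • Finsupp.single y 1)

/-- The Alexander filtration: `F_j` is spanned by the grid states of Alexander
level at most `j`. -/
def Filt (G : GridDiagram m) (j : ℚ) : Submodule (ZMod 2) (GC m) :=
  Submodule.span (ZMod 2)
    {f | ∃ x : Equiv.Perm (Fin m), Alex G x ≤ j ∧ f = Finsupp.single x 1}

/-- The Maslov-homogeneous part of degree `d` of the grid complex. -/
def MaslovPart (G : GridDiagram m) (d : ℚ) : Submodule (ZMod 2) (GC m) :=
  Submodule.span (ZMod 2)
    {f | ∃ x : Equiv.Perm (Fin m), MaslovO G x = d ∧ f = Finsupp.single x 1}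

/-- The canonical grid state `x⁻(𝔾)`, at the lower-left corners of the `X`'s. -/
def xminus (G : GridDiagram m) : Equiv.Perm (Fin m) := G.σX

/-- The canonical grid state `x⁺(𝔾)`, at the upper-right corners of the `X`'s:
`x⁺(i) = σX(i-1) + 1`. -/
def xplus (G : GridDiagram m) : Equiv.Perm (Fin m) :=
  finRotate m * G.σX * (finRotate m)⁻¹

/-- The numerator of `Z^r_p` for the grid complex. -/
def ZNg (G : GridDiagram m) (r : ℕ) (p : ℚ) : Submodule (ZMod 2) (GC m) :=
  (Filt G p ⊓ Submodule.comap (delta G) (Filt G (p - r))) ⊔ Filt G (p - 1)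

/-- The numerator of `B^r_p` for the grid complex. -/
def BNg (G : GridDiagram m) (r : ℕ) (p : ℚ) : Submodule (ZMod 2) (GC m) :=
  (Filt G p ⊓ Submodule.map (delta G) (Filt G (p + r - 1))) ⊔ Filt G (p - 1)

/-- The page `E^r_p` of the spectral sequence of the filtered grid complex. -/
abbrev EPageG (G : GridDiagram m) (r : ℕ) (p : ℚ) :=
  ↥(ZNg G r p) ⧸
    (Submodule.comap (ZNg G r p).subtype (BNg G r p) : Submodule (ZMod 2) ↥(ZNg G r p))

/-- The class `[f]^r ∈ E^r_p`. -/
def clsG (G : GridDiagram m) (r : ℕ) (p : ℚ) (f : GC m)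
    (hf : f ∈ Filt G p ⊓ Submodule.comap (delta G) (Filt G (p - r))) : EPageG G r p :=
  Submodule.Quotient.mk ⟨f, Submodule.mem_sup_left hf⟩

/-- `x` survives to the `i`-th page with `d^i`-obstruction vanishing:
there is a correction term `z ∈ F_{A(x)-1}` with `∂̃(x + z) ∈ F_{A(x)-i}`. -/
def survives (G : GridDiagram m) (x : Equiv.Perm (Fin m)) (i : ℕ) : Prop :=
  ∃ z ∈ Filt G (Alex G x - 1), delta G (Finsupp.single x 1 + z) ∈ Filt G (Alex G x - i)

/-- The invariant `n(𝔾, x) ∈ ℕ∞`: the smallest `i ≥ 1` such that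
`d^i [x]^i ≠ 0`, and `∞` if no such `i` exists. -/
def nInv (G : GridDiagram m) (x : Equiv.Perm (Fin m)) : ℕ∞ :=
  sInf {n : ℕ∞ | ∃ k : ℕ, n = (k : ℕ∞) ∧ 1 ≤ k ∧ ¬ survives G x (k + 1)}

/-- The invariant `n⁺(𝔾)`. -/
def nPlus (G : GridDiagram m) : ℕ∞ := nInv G (xplus G)

/-- The invariant `n⁻(𝔾)`. -/
def nMinus (G : GridDiagram m) : ℕ∞ := nInv G (xminus G)

/-- `w` is a chain-level representative of the class `λ̃_i = [x]^i` on the `i`-th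
page: `w` lies in `F_{A(x)} ∩ ∂̃⁻¹(F_{A(x)-i})` and agrees with `x` modulo
`F_{A(x)-1}`. -/
def IsLambdaRep (G : GridDiagram m) (x : Equiv.Perm (Fin m)) (i : ℕ) (w : GC m) : Prop :=
  w ∈ Filt G (Alex G x) ⊓ Submodule.comap (delta G) (Filt G (Alex G x - i)) ∧
    w - Finsupp.single x 1 ∈ Filt G (Alex G x - 1)

/-- The class `λ̃_i(𝔾) = [x]^i ∈ E^i_{A(x)}` vanishes. -/
def LambdaVanishes (G : GridDiagram m) (x : Equiv.Perm (Fin m)) (i : ℕ) : Prop :=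
  ∃ w : GC m, IsLambdaRep G x i w ∧ w ∈ BNg G i (Alex G x)

/-- The map induced by `Φ` on the `i`-th pages carries the class `[x]^i` at
filtration level `p` to the class `[x']^i` at filtration level `p'`. -/
def MapsLambda (G : GridDiagram m) (G' : GridDiagram m') (Φ : GC m →ₗ[ZMod 2] GC m')
    (i : ℕ) (p p' : ℚ) (x : Equiv.Perm (Fin m)) (x' : Equiv.Perm (Fin m')) : Prop :=
  ∀ w : GC m, w ∈ Filt G p ⊓ Submodule.comap (delta G) (Filt G (p - i)) →
    w - Finsupp.single x 1 ∈ Filt G (p - 1) →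
    ∃ (w' : GC m') (hw' : w' ∈ Filt G' p' ⊓ Submodule.comap (delta G') (Filt G' (p' - i))),
      w' - Finsupp.single x' 1 ∈ Filt G' (p' - 1) ∧
      ∃ hm : Φ w ∈ ZNg G' i p',
        (Submodule.Quotient.mk ⟨Φ w, hm⟩ : EPageG G' i p') = clsG G' i p' w' hw'

/-! ### Grid moves -/

/-- The closed cyclic interval `[u, v]` in `Fin m`. -/
def ccInt (u v : Fin m) : Finset (Fin m) :=
  Finset.univ.filter fun w => (w - u).val ≤ (v - u).val

/-- The open cyclic interval `(u, v)` in `Fin m`. -/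
def ooInt (u v : Fin m) : Finset (Fin m) :=
  Finset.univ.filter fun w => 0 < (w - u).val ∧ (w - u).val < (v - u).val

/-- The closed arcs `[u₁, v₁]` and `[u₂, v₂]` are disjoint, or one is contained
in the interior of the other. -/
def ArcsOK (u₁ v₁ u₂ v₂ : Fin m) : Prop :=
  ccInt u₁ v₁ ∩ ccInt u₂ v₂ = ∅ ∨ ccInt u₁ v₁ ⊆ ooInt u₂ v₂ ∨ ccInt u₂ v₂ ⊆ ooInt u₁ v₁

/-- Some choice of arcs joining `a₁` to `b₁` and `a₂` to `b₂` is disjoint or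
nested (one contained in the interior of the other). -/
def Commutable (a₁ b₁ a₂ b₂ : Fin m) : Prop :=
  ArcsOK a₁ b₁ a₂ b₂ ∨ ArcsOK a₁ b₁ b₂ a₂ ∨ ArcsOK b₁ a₁ a₂ b₂ ∨ ArcsOK b₁ a₁ b₂ a₂

/-- `G₂` is obtained from `G₁` by commuting two adjacent columns. -/
def ColCommutation (G₁ G₂ : GridDiagram m) : Prop :=
  ∃ c c' : Fin m, c'.val = (c.val + 1) % m ∧ c ≠ c' ∧
    G₂.σO = G₁.σO * Equiv.swap c c' ∧ G₂.σX = G₁.σX * Equiv.swap c c' ∧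
    Commutable (G₁.σO c) (G₁.σX c) (G₁.σO c') (G₁.σX c')

/-- `G₂` is obtained from `G₁` by commuting two adjacent rows. -/
def RowCommutation (G₁ G₂ : GridDiagram m) : Prop :=
  ∃ h h' : Fin m, h'.val = (h.val + 1) % m ∧ h ≠ h' ∧
    G₂.σO = Equiv.swap h h' * G₁.σO ∧ G₂.σX = Equiv.swap h h' * G₁.σX ∧
    Commutable (G₁.σO⁻¹ h) (G₁.σX⁻¹ h) (G₁.σO⁻¹ h') (G₁.σX⁻¹ h')

/-- `G₁` and `G₂` differ by a commutation move. -/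
def Commutation (G₁ G₂ : GridDiagram m) : Prop :=
  ColCommutation G₁ G₂ ∨ RowCommutation G₁ G₂

/-- `G₁` is obtained from `G₂` by a stabilization of type `X:SE` at the
`X`-marker in column `c`: the row and column of that `X` are split in two, and
the new `2×2` block (columns `c, c+1`, rows `h, h+1` where `h = σX c`) carries
an `O` in its northwest cell, `X`'s in its northeast and southwest cells, and
its southeast cell is empty; all other markers are unchanged. -/
def StabXSE (G₁ : GridDiagram (m + 1)) (G₂ : GridDiagram m) : Prop :=
  ∃ c : Fin m,
    (∀ i : Fin m, G₁.σO (c.castSucc.succAbove i) = (G₂.σX c).succ.succAbove (G₂.σO i)) ∧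
    G₁.σO c.castSucc = (G₂.σX c).succ ∧
    (∀ i : Fin m, i ≠ c →
      G₁.σX (c.castSucc.succAbove i) = (G₂.σX c).succ.succAbove (G₂.σX i)) ∧
    G₁.σX c.castSucc = (G₂.σX c).castSucc ∧
    G₁.σX c.succ = (G₂.σX c).succ

/-- `G₁` is obtained from `G₂` by a stabilization of type `X:NW`: the new `2×2`
block carries an `O` in its southeast cell, `X`'s in its northeast and southwest
cells, and its northwest cell is empty. -/
def StabXNW (G₁ : GridDiagram (m + 1)) (G₂ : GridDiagram m) : Prop :=
  ∃ c : Fin m,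
    (∀ i : Fin m, G₁.σO (c.succ.succAbove i) = (G₂.σX c).castSucc.succAbove (G₂.σO i)) ∧
    G₁.σO c.succ = (G₂.σX c).castSucc ∧
    (∀ i : Fin m, i ≠ c →
      G₁.σX (c.succ.succAbove i) = (G₂.σX c).castSucc.succAbove (G₂.σX i)) ∧
    G₁.σX c.castSucc = (G₂.σX c).castSucc ∧
    G₁.σX c.succ = (G₂.σX c).succ

/-- `Gp` is obtained from `Gm` by an X swap (pinch move): the diagrams agree
except in two adjacent rows `h` (lower) and `h' = h+1` (upper), whose four
markers lie in columns `c₁ < c₂ < c₃ < c₄` with at least one column strictly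
between `c₂` and `c₃`; both diagrams have `O`'s in the upper row in column `c₁`
and in the lower row in column `c₄`; in `Gm` the `X`'s are at `(c₂, h')` and
`(c₃, h)`, while in `Gp` they are at `(c₃, h')` and `(c₂, h)`. -/
def XSwap (Gp Gm : GridDiagram m) : Prop :=
  ∃ h h' c₁ c₂ c₃ c₄ : Fin m,
    h'.val = h.val + 1 ∧
    c₁ < c₂ ∧ c₂ < c₃ ∧ c₃ < c₄ ∧ c₂.val + 1 < c₃.val ∧
    Gp.σO = Gm.σO ∧
    Gm.σO c₁ = h' ∧ Gm.σO c₄ = h ∧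
    Gm.σX c₂ = h' ∧ Gm.σX c₃ = h ∧
    Gp.σX = Gm.σX * Equiv.swap c₂ c₃

/-- `Gp` is obtained from `Gm` by an O swap (pinch move): as in `XSwap`, with
the roles of the `X`- and `O`-markers exchanged. -/
def OSwap (Gp Gm : GridDiagram m) : Prop :=
  ∃ h h' c₁ c₂ c₃ c₄ : Fin m,
    h'.val = h.val + 1 ∧
    c₁ < c₂ ∧ c₂ < c₃ ∧ c₃ < c₄ ∧ c₂.val + 1 < c₃.val ∧
    Gp.σX = Gm.σX ∧
    Gm.σX c₁ = h' ∧ Gm.σX c₄ = h ∧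
    Gm.σO c₂ = h' ∧ Gm.σO c₃ = h ∧
    Gp.σO = Gm.σO * Equiv.swap c₂ c₃

/-- The column re-indexing for a birth move at column `c`: two new columns are
inserted immediately to the right of column `c`. -/
def insCol (c i : Fin m) : Fin (m + 2) :=
  if i.val ≤ c.val then ⟨i.val, by have := i.isLt; omega⟩
  else ⟨i.val + 2, by have := i.isLt; omega⟩

/-- The row re-indexing for a birth move at the `O` in row `g`: two new rows are
inserted immediately below row `g`. -/
def insRow (g j : Fin m) : Fin (m + 2) :=
  if j.val < g.val then ⟨j.val, by have := j.isLt; omega⟩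
  else ⟨j.val + 2, by have := j.isLt; omega⟩

/-- `Gp` is obtained from `Gm` by a birth move: directly to the bottom-right of
the `O`-marker at `(c, g)` (`g = σO c`), two new adjacent columns `c+1, c+2` and
two new adjacent rows `g, g+1` are inserted, whose new `2×2` block carries
`O`-markers in its northwest `(c+1, g+1)` and southeast `(c+2, g)` cells and
`X`-markers in its northeast `(c+2, g+1)` and southwest `(c+1, g)` cells; all
other markers are unchanged. -/
def Birth (Gp : GridDiagram (m + 2)) (Gm : GridDiagram m) : Prop :=
  ∃ c : Fin m,
    (∀ i : Fin m, Gp.σO (insCol c i) = insRow (Gm.σO c) (Gm.σO i)) ∧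
    Gp.σO ⟨c.val + 1, by have := c.isLt; omega⟩ =
      ⟨(Gm.σO c).val + 1, by have := (Gm.σO c).isLt; omega⟩ ∧
    Gp.σO ⟨c.val + 2, by have := c.isLt; omega⟩ =
      ⟨(Gm.σO c).val, by have := (Gm.σO c).isLt; omega⟩ ∧
    (∀ i : Fin m, Gp.σX (insCol c i) = insRow (Gm.σO c) (Gm.σX i)) ∧
    Gp.σX ⟨c.val + 1, by have := c.isLt; omega⟩ =
      ⟨(Gm.σO c).val, by have := (Gm.σO c).isLt; omega⟩ ∧
    Gp.σX ⟨c.val + 2, by have := c.isLt; omega⟩ =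
      ⟨(Gm.σO c).val + 1, by have := (Gm.σO c).isLt; omega⟩

/-- A finite sequence of commutations and `X:SE`/`X:NW` (de)stabilizations
joining two grid diagrams (so that they represent the same Legendrian link). -/
inductive LegSeq : (Σ m : ℕ, GridDiagram m) → (Σ m : ℕ, GridDiagram m) → Prop
  | refl (X : Σ m : ℕ, GridDiagram m) : LegSeq X X
  | comm {m : ℕ} {G₁ G₂ : GridDiagram m} {Y : Σ m : ℕ, GridDiagram m}
      (h : Commutation G₁ G₂) (tail : LegSeq ⟨m, G₂⟩ Y) : LegSeq ⟨m, G₁⟩ Y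
  | stab {m : ℕ} {G₁ : GridDiagram (m + 1)} {G₂ : GridDiagram m} {Y : Σ m : ℕ, GridDiagram m}
      (h : StabXSE G₁ G₂ ∨ StabXNW G₁ G₂) (tail : LegSeq ⟨m + 1, G₁⟩ Y) :
      LegSeq ⟨m, G₂⟩ Y
  | destab {m : ℕ} {G₁ : GridDiagram (m + 1)} {G₂ : GridDiagram m} {Y : Σ m : ℕ, GridDiagram m}
      (h : StabXSE G₁ G₂ ∨ StabXNW G₁ G₂) (tail : LegSeq ⟨m, G₂⟩ Y) :
      LegSeq ⟨m + 1, G₁⟩ Y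

/-- `CobSeq X Y P B`: a finite sequence of moves from the grid diagram `X`
(playing the role of `𝔾₊`) down to `Y` (playing the role of `𝔾₋`), each step
being a commutation, an `X:SE`/`X:NW` stabilization or destabilization, an
X swap or O swap (a pinch), or a birth, with `P` pinch steps and `B` birth
steps; this is the combinatorial counterpart of a decomposable Lagrangian
cobordism from the Legendrian link of `Y` to that of `X`. -/
inductive CobSeq :
    (Σ m : ℕ, GridDiagram m) → (Σ m : ℕ, GridDiagram m) → ℕ → ℕ → Prop
  | refl (X : Σ m : ℕ, GridDiagram m) : CobSeq X X 0 0
  | comm {m : ℕ} {G₁ G₂ : GridDiagram m} {Y : Σ m : ℕ, GridDiagram m} {P B : ℕ}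
      (h : Commutation G₁ G₂) (tail : CobSeq ⟨m, G₂⟩ Y P B) : CobSeq ⟨m, G₁⟩ Y P B
  | stab {m : ℕ} {G₁ : GridDiagram (m + 1)} {G₂ : GridDiagram m}
      {Y : Σ m : ℕ, GridDiagram m} {P B : ℕ}
      (h : StabXSE G₁ G₂ ∨ StabXNW G₁ G₂) (tail : CobSeq ⟨m + 1, G₁⟩ Y P B) :
      CobSeq ⟨m, G₂⟩ Y P B
  | destab {m : ℕ} {G₁ : GridDiagram (m + 1)} {G₂ : GridDiagram m}
      {Y : Σ m : ℕ, GridDiagram m} {P B : ℕ}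
      (h : StabXSE G₁ G₂ ∨ StabXNW G₁ G₂) (tail : CobSeq ⟨m, G₂⟩ Y P B) :
      CobSeq ⟨m + 1, G₁⟩ Y P B
  | xswap {m : ℕ} {Gp Gm : GridDiagram m} {Y : Σ m : ℕ, GridDiagram m} {P B : ℕ}
      (h : XSwap Gp Gm) (tail : CobSeq ⟨m, Gm⟩ Y P B) : CobSeq ⟨m, Gp⟩ Y (P + 1) B
  | oswap {m : ℕ} {Gp Gm : GridDiagram m} {Y : Σ m : ℕ, GridDiagram m} {P B : ℕ}
      (h : OSwap Gp Gm) (tail : CobSeq ⟨m, Gm⟩ Y P B) : CobSeq ⟨m, Gp⟩ Y (P + 1) B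
  | birth {m : ℕ} {Gp : GridDiagram (m + 2)} {Gm : GridDiagram m}
      {Y : Σ m : ℕ, GridDiagram m} {P B : ℕ}
      (h : Birth Gp Gm) (tail : CobSeq ⟨m, Gm⟩ Y P B) : CobSeq ⟨m + 2, Gp⟩ Y P (B + 1)

end Grid

/-!
Write `a = x i`, `b = x j`; the grid states `x` and `y = x ∘ (i j)` differ only in columns `i` and
`j`. The indicator counted by `I(P,Q)` is a product of a column and a row comparison, so passing
from `x` to `y` changes `I(x,P)` and `I(P,x)` by sums of products
`([i ≤ p₁] - [j ≤ p₁]) · ([a ≤ p₂] - [b ≤ p₂])` of signed interval indicators. Over the markers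
this gives `J(x,𝕆) - J(y,𝕆) = Σ_𝕆`, the sum of these products over `𝕆`; for `J(x,x) - J(y,y)`
it gives `2 Σ_x - 1`, the `-1` coming from the corners `(i,a)`, `(j,b)`, where strict and weak
comparisons differ. Each signed indicator is the indicator of a cyclic side of `r` up to a
constant, and the constant parts of `Σ_x` and `Σ_𝕆` agree because `x` and `σ_O` are both
permutations, so `Σ_x - Σ_𝕆 = #(r ∩ x) - #(r ∩ 𝕆)`. Finally `r ∩ x` consists of `Int(r) ∩ x` and
the corner `(i,a)`. The Alexander formula is half the difference of the formulas for `𝕆` and `𝕏`.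
-/

namespace Grid

open Equiv

variable {m : ℕ}

section Swap

variable {α β M : Type*} [Fintype α] [DecidableEq α] [AddCommGroup M]

theorem sum_sub_sum_comp_swap (f : α → β → M) (x : α → β) {i j : α} (hij : i ≠ j) :
    ∑ k, f k (x k) - ∑ k, f k (x (swap i j k)) =
      f i (x i) + f j (x j) - (f i (x j) + f j (x i)) := by
  rw [← sum_sub_distrib, Fintype.sum_eq_add i j hij fun k hk => by
    rw [swap_apply_of_ne_of_ne hk.1 hk.2, sub_self]]
  rw [swap_apply_left, swap_apply_right]
  abel

variable {γ δ : Type*} [Fintype γ]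

theorem sum_sum_mul_sub_comp_swap_left (A : α → γ → ℚ) (B : β → δ → ℚ) (x : α → β)
    (z : γ → δ) {i j : α} (hij : i ≠ j) :
    ∑ k, ∑ c, A k c * B (x k) (z c) - ∑ k, ∑ c, A k c * B (x (swap i j k)) (z c) =
      ∑ c, (A i c - A j c) * (B (x i) (z c) - B (x j) (z c)) := by
  rw [sum_sub_sum_comp_swap (fun k w => ∑ c, A k c * B w (z c)) x hij]
  simp only [← sum_add_distrib, ← sum_sub_distrib]
  exact sum_congr rfl fun c _ => by ring

theorem sum_sum_mul_sub_comp_swap_right (A : γ → α → ℚ) (B : δ → β → ℚ) (z : γ → δ)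
    (x : α → β) {i j : α} (hij : i ≠ j) :
    ∑ k, ∑ c, A k c * B (z k) (x c) - ∑ k, ∑ c, A k c * B (z k) (x (swap i j c)) =
      ∑ k, (A k i - A k j) * (B (z k) (x i) - B (z k) (x j)) := by
  rw [← sum_sub_distrib]
  refine sum_congr rfl fun k _ => ?_
  rw [sum_sub_sum_comp_swap (fun c w => A k c * B (z k) w) x hij]
  ring

end Swap

theorem Icount_eq_sum (P Q : Finset (ℚ × ℚ)) :
    Icount P Q = ∑ p ∈ P, ∑ q ∈ Q, if p.1 < q.1 ∧ p.2 < q.2 then 1 else 0 := by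
  rw [Icount, card_filter, sum_product]

theorem natCast_lt_natCast_add_half {k c : ℕ} : (k : ℚ) < c + 1 / 2 ↔ k ≤ c := by
  constructor
  · intro h
    by_contra hc
    have : (c : ℚ) + 1 ≤ k := by exact_mod_cast not_le.mp hc
    linarith
  · intro h
    have : (k : ℚ) ≤ c := by exact_mod_cast h
    linarith

theorem natCast_add_half_lt_natCast {c k : ℕ} : (c : ℚ) + 1 / 2 < k ↔ c < k := by
  constructor
  · intro h
    by_contra hc
    have : (k : ℚ) ≤ c := by exact_mod_cast not_lt.mp hc
    linarith
  · intro h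
    have : (c : ℚ) + 1 ≤ k := by exact_mod_cast h
    linarith

def markers (σ : Perm (Fin m)) : Finset (ℚ × ℚ) :=
  univ.image fun i => ((i.val : ℚ) + 1 / 2, ((σ i).val : ℚ) + 1 / 2)

theorem ptSet_injective (u : Perm (Fin m)) :
    Function.Injective fun i : Fin m => ((i.val : ℚ), ((u i).val : ℚ)) :=
  fun _ _ h => Fin.val_injective (Nat.cast_injective (congrArg Prod.fst h))

theorem markers_injective (σ : Perm (Fin m)) :
    Function.Injective fun i : Fin m => ((i.val : ℚ) + 1 / 2, ((σ i).val : ℚ) + 1 / 2) :=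
  fun _ _ h => Fin.val_injective (Nat.cast_injective (add_right_cancel (congrArg Prod.fst h)))

theorem Icount_ptSet_ptSet (u v : Perm (Fin m)) :
    (Icount (ptSet u) (ptSet v) : ℚ) =
      ∑ k, ∑ l, (if k < l then 1 else 0) * (if u k < v l then 1 else 0) := by
  rw [Icount_eq_sum, ptSet, sum_image (ptSet_injective u).injOn, ptSet]
  simp only [Nat.cast_sum, Nat.cast_ite, Nat.cast_one, Nat.cast_zero]
  refine sum_congr rfl fun k _ => ?_
  rw [sum_image (ptSet_injective v).injOn]
  simp only [ite_zero_mul_ite_zero, mul_one, Nat.cast_lt, Fin.val_fin_lt]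

theorem Icount_ptSet_markers (u σ : Perm (Fin m)) :
    (Icount (ptSet u) (markers σ) : ℚ) =
      ∑ k, ∑ c, (if k ≤ c then 1 else 0) * (if u k ≤ σ c then 1 else 0) := by
  rw [Icount_eq_sum, ptSet, sum_image (ptSet_injective u).injOn]
  simp only [Nat.cast_sum, Nat.cast_ite, Nat.cast_one, Nat.cast_zero]
  refine sum_congr rfl fun k _ => ?_
  rw [markers, sum_image (markers_injective σ).injOn]
  simp only [ite_zero_mul_ite_zero, mul_one, natCast_lt_natCast_add_half, Fin.val_fin_le]

theorem Icount_markers_ptSet (σ u : Perm (Fin m)) :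
    (Icount (markers σ) (ptSet u) : ℚ) =
      ∑ c, ∑ k, (if c < k then 1 else 0) * (if σ c < u k then 1 else 0) := by
  rw [Icount_eq_sum, markers, sum_image (markers_injective σ).injOn]
  simp only [Nat.cast_sum, Nat.cast_ite, Nat.cast_one, Nat.cast_zero]
  refine sum_congr rfl fun c _ => ?_
  rw [ptSet, sum_image (ptSet_injective u).injOn]
  simp only [ite_zero_mul_ite_zero, mul_one, natCast_add_half_lt_natCast, Fin.val_fin_lt]

section IntervalSign

variable {α β : Type*} [LinearOrder α] [LinearOrder β]

def intervalSign (i j k : α) : ℚ := (if i ≤ k then 1 else 0) - if j ≤ k then 1 else 0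

theorem ite_lt_sub_ite_lt (i j k : α) :
    ((if k < i then 1 else 0) - if k < j then 1 else 0 : ℚ) = -intervalSign i j k := by
  simp only [intervalSign, ← not_le]
  split_ifs <;> norm_num

theorem ite_lt_sub_ite_lt_of_ne {i j k : α} (hi : k ≠ i) (hj : k ≠ j) :
    ((if i < k then 1 else 0) - if j < k then 1 else 0 : ℚ) = intervalSign i j k := by
  simp only [intervalSign, hi.symm.le_iff_lt, hj.symm.le_iff_lt]

variable [Fintype α]

def rectSum (i j : α) (a b : β) (τ : α → β) : ℚ :=
  ∑ k, intervalSign i j k * intervalSign a b (τ k)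

variable [DecidableEq α]

theorem sum_ite_lt_comp_swap {x : α → β} (hx : Function.Injective x) {i j : α} (hij : i ≠ j) :
    ∑ k, ((if i < k then 1 else 0) - (if j < k then 1 else 0) : ℚ) *
        ((if x i < x (swap i j k) then 1 else 0) - if x j < x (swap i j k) then 1 else 0) =
      rectSum i j (x i) (x j) x - 1 := by
  have hoff : ∀ k, k ≠ i ∧ k ≠ j →
      ((if i < k then 1 else 0) - (if j < k then 1 else 0) : ℚ) *
          ((if x i < x (swap i j k) then 1 else 0) - if x j < x (swap i j k) then 1 else 0) -
        intervalSign i j k * intervalSign (x i) (x j) (x k) = 0 := by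
    rintro k ⟨hki, hkj⟩
    rw [swap_apply_of_ne_of_ne hki hkj, ite_lt_sub_ite_lt_of_ne hki hkj,
      ite_lt_sub_ite_lt_of_ne (hx.ne hki) (hx.ne hkj), sub_self]
  have hsum := Fintype.sum_eq_add i j hij hoff
  rw [sum_sub_distrib, swap_apply_left, swap_apply_right] at hsum
  have hab : x i ≠ x j := hx.ne hij
  have hcorners :
      ((if i < i then 1 else 0) - (if j < i then 1 else 0) : ℚ) *
          ((if x i < x j then 1 else 0) - if x j < x j then 1 else 0) -
        intervalSign i j i * intervalSign (x i) (x j) (x i) +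
      (((if i < j then 1 else 0) - (if j < j then 1 else 0)) *
          ((if x i < x i then 1 else 0) - if x j < x i then 1 else 0) -
        intervalSign i j j * intervalSign (x i) (x j) (x j)) = -1 := by
    rcases hij.lt_or_gt with h | h <;> rcases hab.lt_or_gt with h' | h' <;>
      simp [intervalSign, h, h', h.le, h'.le, not_le.mpr h, not_le.mpr h', not_lt.mpr h.le,
        not_lt.mpr h'.le]
  rw [rectSum]
  linear_combination hsum + hcorners

end IntervalSign

theorem Jcount_ptSet_markers_sub (x σ : Perm (Fin m)) {i j : Fin m} (hij : i ≠ j) :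
    Jcount (ptSet x) (markers σ) - Jcount (ptSet (x * swap i j)) (markers σ) =
      rectSum i j (x i) (x j) σ := by
  have hxm : (Icount (ptSet x) (markers σ) : ℚ) - Icount (ptSet (x * swap i j)) (markers σ) =
      rectSum i j (x i) (x j) σ := by
    rw [Icount_ptSet_markers, Icount_ptSet_markers]
    exact sum_sum_mul_sub_comp_swap_left (fun k c => if k ≤ c then 1 else 0)
      (fun w d => if w ≤ d then 1 else 0) x σ hij
  have hmx : (Icount (markers σ) (ptSet x) : ℚ) - Icount (markers σ) (ptSet (x * swap i j)) =
      rectSum i j (x i) (x j) σ := by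
    rw [Icount_markers_ptSet, Icount_markers_ptSet]
    refine (sum_sum_mul_sub_comp_swap_right (fun c k => if c < k then 1 else 0)
      (fun d w => if d < w then 1 else 0) σ x hij).trans ?_
    simp only [rectSum, ite_lt_sub_ite_lt, neg_mul_neg]
  rw [Jcount, Jcount]
  linear_combination (hxm + hmx) / 2

theorem Jcount_ptSet_self_sub (x : Perm (Fin m)) {i j : Fin m} (hij : i ≠ j) :
    Jcount (ptSet x) (ptSet x) - Jcount (ptSet (x * swap i j)) (ptSet (x * swap i j)) =
      2 * rectSum i j (x i) (x j) x - 1 := by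
  have hleft : (Icount (ptSet x) (ptSet (x * swap i j)) : ℚ) -
      Icount (ptSet (x * swap i j)) (ptSet (x * swap i j)) = rectSum i j (x i) (x j) x - 1 := by
    rw [Icount_ptSet_ptSet, Icount_ptSet_ptSet]
    exact (sum_sum_mul_sub_comp_swap_left (fun k l => if k < l then 1 else 0)
      (fun w v => if w < v then 1 else 0) x ⇑(x * swap i j) hij).trans
      (sum_ite_lt_comp_swap x.injective hij)
  have hright : (Icount (ptSet x) (ptSet x) : ℚ) - Icount (ptSet x) (ptSet (x * swap i j)) =
      rectSum i j (x i) (x j) x := by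
    rw [Icount_ptSet_ptSet, Icount_ptSet_ptSet]
    refine (sum_sum_mul_sub_comp_swap_right (fun k l => if k < l then 1 else 0)
      (fun w v => if w < v then 1 else 0) x x hij).trans ?_
    simp only [rectSum, ite_lt_sub_ite_lt, neg_mul_neg]
  rw [Jcount, Jcount]
  linear_combination hleft + hright

theorem val_sub_eq_ite (u w : Fin m) :
    (w - u).val = if u ≤ w then w.val - u.val else m + w.val - u.val := by
  split_ifs with h
  · exact Fin.coe_sub_iff_le.mpr h
  · exact Fin.coe_sub_iff_lt.mpr (not_le.mp h)

theorem left_mem_cycInt {u v : Fin m} (h : u ≠ v) : u ∈ cycInt u v := by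
  have := Fin.val_ne_of_ne h
  simp only [cycInt, mem_filter, mem_univ, true_and, val_sub_eq_ite, Fin.le_def]
  split_ifs <;> omega

theorem prev_mem_cycInt_iff {u v w : Fin m} (hw : w ∈ cycInt u v) :
    prev w ∈ cycInt u v ↔ w ≠ u := by
  obtain ⟨n, rfl⟩ : ∃ n, m = n + 1 := ⟨m - 1, by have := u.pos; omega⟩
  have hprev : prev w = w - 1 := by
    rw [prev, Perm.inv_eq_iff_eq, finRotate_apply, sub_add_cancel]
  simp only [cycInt, mem_filter, mem_univ, true_and] at hw ⊢
  rw [hprev, sub_right_comm, Fin.coe_sub_one]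
  split_ifs with h
  · have := (v - u).isLt
    simp only [sub_eq_zero.mp h, ne_eq, not_true_eq_false, iff_false]
    omega
  · have hwu : w ≠ u := fun e => h (sub_eq_zero.mpr e)
    simp only [ne_eq, hwu, not_false_eq_true, iff_true]
    omega

theorem intervalSign_eq_cycInt {i j : Fin m} (hij : i ≠ j) (k : Fin m) :
    intervalSign i j k = (if k ∈ cycInt i j then 1 else 0) - if j < i then 1 else 0 := by
  have := Fin.val_ne_of_ne hij
  simp only [intervalSign, cycInt, mem_filter, mem_univ, true_and, val_sub_eq_ite, Fin.le_def,
    Fin.lt_def]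
  split_ifs <;> first | (exfalso; omega) | norm_num

theorem rectSum_sub_rectSum (x σ : Perm (Fin m)) {i j a b : Fin m} (hij : i ≠ j) (hab : a ≠ b) :
    rectSum i j a b x - rectSum i j a b σ =
      (#{c | (c, x c) ∈ rectCells i j a b} : ℚ) - #{c | (c, σ c) ∈ rectCells i j a b} := by
  set C : Fin m → ℚ := fun k => if k ∈ cycInt i j then 1 else 0
  set R : Fin m → ℚ := fun k => if k ∈ cycInt a b then 1 else 0
  have hperm : ∑ k, R (x k) = ∑ k, R (σ k) :=
    (Equiv.sum_comp x R).trans (Equiv.sum_comp σ R).symm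
  calc rectSum i j a b x - rectSum i j a b σ
      = ∑ k, C k * R (x k) - ∑ k, C k * R (σ k) -
          (if j < i then 1 else 0) * (∑ k, R (x k) - ∑ k, R (σ k)) := by
        simp only [rectSum, intervalSign_eq_cycInt hij, intervalSign_eq_cycInt hab, mul_sum,
          ← sum_sub_distrib]
        exact sum_congr rfl fun k _ => by ring
    _ = _ := by
        rw [hperm, sub_self, mul_zero, sub_zero, natCast_card_filter, natCast_card_filter]
        simp only [C, R, rectCells, mem_product, ite_zero_mul_ite_zero, mul_one]

theorem card_filter_mem_rectCells_self (x : Perm (Fin m)) {i j : Fin m} (hij : i ≠ j) :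
    #{c | (c, x c) ∈ rectCells i j (x i) (x j)} = #(intPts x (rectCells i j (x i) (x j))) + 1 := by
  have hi : (i, x i) ∈ rectCells i j (x i) (x j) :=
    mem_product.mpr ⟨left_mem_cycInt hij, left_mem_cycInt (x.injective.ne hij)⟩
  have hint : intPts x (rectCells i j (x i) (x j)) =
      ({c | (c, x c) ∈ rectCells i j (x i) (x j)} : Finset (Fin m)).erase i := by
    ext k
    simp only [intPts, rectCells, mem_erase, mem_filter, mem_univ, true_and, mem_product]
    constructor
    · rintro ⟨⟨hk, hxk⟩, ⟨hpk, -⟩, -⟩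
      exact ⟨(prev_mem_cycInt_iff hk).mp hpk, hk, hxk⟩
    · rintro ⟨hki, hk, hxk⟩
      have hpk := (prev_mem_cycInt_iff hk).mpr hki
      have hpxk := (prev_mem_cycInt_iff hxk).mpr (x.injective.ne hki)
      exact ⟨⟨hk, hxk⟩, ⟨hpk, hxk⟩, ⟨hk, hpxk⟩, hpk, hpxk⟩
  rw [hint, card_erase_of_mem (mem_filter.mpr ⟨mem_univ i, hi⟩),
    Nat.sub_add_cancel (card_pos.mpr ⟨i, mem_filter.mpr ⟨mem_univ i, hi⟩⟩)]

def maslov (σ x : Perm (Fin m)) : ℚ :=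
  Jcount (ptSet x) (ptSet x) - 2 * Jcount (ptSet x) (markers σ)
    + Jcount (markers σ) (markers σ) + 1

theorem maslov_sub_maslov_mul_swap (σ x : Perm (Fin m)) {i j : Fin m} (hij : i ≠ j) :
    maslov σ x - maslov σ (x * swap i j) =
      1 - 2 * (#{c | (c, σ c) ∈ rectCells i j (x i) (x j)} : ℚ)
        + 2 * (#(intPts x (rectCells i j (x i) (x j))) : ℚ) := by
  have hself := Jcount_ptSet_self_sub x hij
  have hmarkers := Jcount_ptSet_markers_sub x σ hij
  have hrect := rectSum_sub_rectSum x σ hij (x.injective.ne hij)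
  have hcorner : (#{c | (c, x c) ∈ rectCells i j (x i) (x j)} : ℚ) =
      #(intPts x (rectCells i j (x i) (x j))) + 1 := by
    exact_mod_cast card_filter_mem_rectCells_self x hij
  rw [maslov, maslov]
  linear_combination hself - 2 * hmarkers + 2 * hrect + 2 * hcorner

theorem maslov_alex_sub_of_eq_rectCells (G : GridDiagram m) (x : Perm (Fin m)) {i j : Fin m}
    (hij : i ≠ j) {r : Finset (Fin m × Fin m)} (hr : r = rectCells i j (x i) (x j)) :
    MaslovO G x - MaslovO G (x * swap i j) =
        1 - 2 * (countO G r : ℚ) + 2 * ((intPts x r).card : ℚ) ∧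
      Alex G x - Alex G (x * swap i j) = (countX G r : ℚ) - (countO G r : ℚ) := by
  subst hr
  have hO : MaslovO G x - MaslovO G (x * swap i j) = _ := maslov_sub_maslov_mul_swap G.σO x hij
  have hX : MaslovX G x - MaslovX G (x * swap i j) = _ := maslov_sub_maslov_mul_swap G.σX x hij
  refine ⟨hO, ?_⟩
  rw [Alex, Alex, countO, countX]
  linear_combination (hO - hX) / 2

end Grid

/-- For grid states `x`, `y` of a grid diagram `𝔾` and a
rectangle `r ∈ Rect(x,y)`:
`M(x) − M(y) = 1 − 2·#(r ∩ 𝕆) + 2·#(Int(r) ∩ x)` and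
`A(x) − A(y) = #(r ∩ 𝕏) − #(r ∩ 𝕆)`. -/
theorem statement9 {m : ℕ} (G : GridDiagram m) (x y : Equiv.Perm (Fin m))
    (r : Finset (Fin m × Fin m)) (hr : r ∈ Grid.Rect x y) :
    Grid.MaslovO G x - Grid.MaslovO G y =
      1 - 2 * (Grid.countO G r : ℚ) + 2 * ((Grid.intPts x r).card : ℚ) ∧
    Grid.Alex G x - Grid.Alex G y =
      (Grid.countX G r : ℚ) - (Grid.countO G r : ℚ) := by
  obtain ⟨i, j, hij, rfl, hr | hr⟩ := hr
  · exact Grid.maslov_alex_sub_of_eq_rectCells G x hij hr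
  · rw [Equiv.swap_comm]
    exact Grid.maslov_alex_sub_of_eq_rectCells G x hij.symm hr
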